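/- arXiv:2009.05790 — 2 statements merged into one kernel-verified Lean document; each statement's English description precedes it below -/
import Mathlib

section
/- Let (X_{it}) be a real-valued field whose rows (X_{it})_{t∈ℤ}, i=1,2,…, are iid stationary m-dependent sequences with generic element X, and let S_{ij}^{(n)}=Σ_{t=1}^n X_{it}X_{jt} and p=p_n→∞. Assume: (i) the distribution of X² is in MDA(Λ), i.e. there exist c_n>0, d_n∈ℝ with c_n⁻¹(max_{i≤n}X_i² − d_n) converging in distribution to the standard Gumbel law; (ii) P(S_{11}^{(n)} − n E[X²] > c_{np}x + d_{np}) ~ n P(X²>c_{np}x + d_{np}) for every x∈ℝ; (iii) P(S_{12}^{(n)} − n(E[X])² > c_{np}x + d_{np}) ≤ c n P(X₁X₂>c_{np}x + d_{np}) = o(p^{−2}) for every x∈ℝ, where X₁,X₂ are independent copies of X. Then c_{np}^{−1} max_{1≤i<j≤p}((S_{ij}^{(n)} − n(E[X])²) − d_{np}) → −∞ in probability, and c_{np}^{−1} max_{i≤p}((S_{ii}^{(n)} − n E[X²]) − d_{np}) converges in distribution to the standard Gumbel law Λ(x)=exp(−e^{−x}). -/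
open MeasureTheory ProbabilityTheory Filter Set Asymptotics
open scoped ENNReal NNReal Topology

namespace PLD

variable {Ω : Type*} [MeasureSpace Ω]

/-- Probability of an event, as a real number. -/
noncomputable def pr (A : Set Ω) : ℝ := (ℙ A).toReal

/-- The tail `P(X > x)` of a real random variable. -/
noncomputable def tail (X : Ω → ℝ) (x : ℝ) : ℝ := pr {ω | x < X ω}

/-- The two-sided tail `P(|X| > x)`. -/
noncomputable def atail (X : Ω → ℝ) (x : ℝ) : ℝ := pr {ω | x < |X ω|}

/-- The tail of a measure on `ℝ`. -/
noncomputable def mtail (μ : Measure ℝ) (x : ℝ) : ℝ := (μ (Set.Ioi x)).toReal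

/-- Partial sums `X_0 + ⋯ + X_{n-1}`. -/
def psum (X : ℕ → Ω → ℝ) (n : ℕ) (ω : Ω) : ℝ := ∑ i ∈ Finset.range n, X i ω

/-- A function is slowly varying at infinity. -/
def SlowlyVarying (L : ℝ → ℝ) : Prop :=
  ∀ c : ℝ, 0 < c → Tendsto (fun x => L (c * x) / L x) atTop (𝓝 1)

/-- A function is regularly varying of index `ρ` at infinity. -/
def RegularlyVaryingFun (f : ℝ → ℝ) (ρ : ℝ) : Prop :=
  ∀ c : ℝ, 0 < c → Tendsto (fun x => f (c * x) / f x) atTop (𝓝 (c ^ ρ))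

/-- The right tail of `X` is regularly varying with index `α`:
`P(X > x) = L(x) x^{-α}` for a slowly varying `L`. -/
def RegVaryingTail (X : Ω → ℝ) (α : ℝ) : Prop :=
  ∃ L : ℝ → ℝ, SlowlyVarying L ∧ ∀ᶠ x in atTop, tail X x = L x * x ^ (-α)

/-- Tail balance condition with constants `pp > 0`, `pm ≥ 0`, `pp + pm = 1`. -/
structure TailBalance (X : Ω → ℝ) (pp pm : ℝ) : Prop where
  pos : 0 < pp
  nonneg : 0 ≤ pm
  sum_eq_one : pp + pm = 1
  plus : Tendsto (fun x => tail X x / atail X x) atTop (𝓝 pp)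
  minus : Tendsto (fun x => tail (fun ω => -X ω) x / atail X x) atTop (𝓝 pm)

/-- `n`-fold convolution power of a measure on `ℝ` (law of the sum of `n` iid copies). -/
noncomputable def convPow (μ : Measure ℝ) : ℕ → Measure ℝ
  | 0 => Measure.dirac 0
  | n + 1 => Measure.map (fun p : ℝ × ℝ => p.1 + p.2) ((convPow μ n).prod μ)

/-- A distribution concentrated on `[0,∞)` is subexponential:
`P(S_n > x) ∼ n P(X > x)` as `x → ∞` for every `n ≥ 2`. -/
def SubexponentialMeasure (μ : Measure ℝ) : Prop :=
  μ (Set.Iio 0) = 0 ∧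
  ∀ n : ℕ, 2 ≤ n →
    Tendsto (fun x => mtail (convPow μ n) x / mtail μ x) atTop (𝓝 (n : ℝ))

/-- Two-sided subexponential class `𝒮`: the positive part `X⁺` has a subexponential
distribution and the tail balance condition holds. -/
def ClassS (X : Ω → ℝ) (pp pm : ℝ) : Prop :=
  SubexponentialMeasure (Measure.map (fun ω => max (X ω) 0) ℙ) ∧ TailBalance X pp pm

/-- `a` is an auxiliary function for the (tail-) function `T` in the Gumbel MDA sense:
`T(x + y a(x))/T(x) → e^{-y}`. -/
def IsAuxiliary (T : ℝ → ℝ) (a : ℝ → ℝ) : Prop :=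
  (∀ᶠ x in atTop, 0 < a x) ∧
  ∀ y : ℝ, Tendsto (fun x => T (x + y * a x) / T x) atTop (𝓝 (Real.exp (-y)))

/-- `F ∈ MDA(Λ)` (Gumbel maximum domain of attraction, infinite right endpoint),
via the Pickands–Balkema–de Haan characterization. -/
def GumbelMDA (X : Ω → ℝ) : Prop := ∃ a : ℝ → ℝ, IsAuxiliary (tail X) a

/-- Class `LN`: subexponential distributions with `F̄(x) = exp(-S(x))`, `S` slowly
varying and `S(x)/log x → ∞`. -/
structure ClassLN (X : Ω → ℝ) (S : ℝ → ℝ) (pp pm : ℝ) : Prop where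
  classS : ClassS X pp pm
  tail_eq : ∀ᶠ x in atTop, tail X x = Real.exp (-S x)
  slow : SlowlyVarying S
  heavy : Tendsto (fun x => S x / Real.log x) atTop atTop

/-- Strict stationarity of a sequence of random variables. -/
def Stationary (X : ℕ → Ω → ℝ) : Prop :=
  ∀ (k n : ℕ),
    Measure.map (fun ω => fun i : Fin n => X (k + i) ω) ℙ
      = Measure.map (fun ω => fun i : Fin n => X i ω) ℙ

/-- `m`-dependence: the σ-fields generated by `(X_s, s ≤ t)` and `(X_s, s ≥ t+h)`
are independent whenever `h > m`. -/
def MDep (X : ℕ → Ω → ℝ) (m : ℕ) : Prop :=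
  ∀ t h : ℕ, m < h →
    Indep (⨆ s ∈ Set.Iic t, MeasurableSpace.comap (X s) inferInstance)
          (⨆ s ∈ Set.Ici (t + h), MeasurableSpace.comap (X s) inferInstance) ℙ

/-- `sup_{x > u_n} |f_n(x)| → 0` as `n → ∞`. -/
def UnifSmall (u : ℕ → ℝ) (f : ℕ → ℝ → ℝ) : Prop :=
  ∀ ε : ℝ, 0 < ε → ∀ᶠ n in atTop, ∀ x : ℝ, u n < x → |f n x| < ε

/-- An iid sequence (indexed by `ℕ`). -/
def IID (Z : ℕ → Ω → ℝ) : Prop :=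
  iIndepFun Z ℙ ∧
  ∀ j, Measure.map (Z j) ℙ = Measure.map (Z 0) ℙ

/-- An iid sequence indexed by `ℤ`. -/
def IIDZ (Z : ℤ → Ω → ℝ) : Prop :=
  iIndepFun Z ℙ ∧
  ∀ j, Measure.map (Z j) ℙ = Measure.map (Z 0) ℙ

/-- Condition (C) of Mikosch–Rodionov for the sequence `X` with hazard function `S`,
threshold function `g` and separating sequence `t`. -/
structure CondC (X : ℕ → Ω → ℝ) (m : ℕ) (S g : ℝ → ℝ) (t : ℕ → ℝ) : Prop where
  /- C1 -/
  g_mono : ∃ x₀ : ℝ, MonotoneOn g (Set.Ici x₀)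
  g_tendsto : Tendsto g atTop atTop
  g_le : ∃ C : ℝ, 0 < C ∧ ∀ᶠ x in atTop, g x ≤ C * x / S x
  /- C2 -/
  t_tendsto : Tendsto t atTop atTop
  S_unif : ∀ δ : ℝ, 0 < δ →
    UnifSmall (fun n => t n * δ) (fun _ x => S x / S (g x) - 1)
  g_sqrt : Tendsto (fun n => g (t n) / Real.sqrt n) atTop atTop
  iid_ld : ∀ δ : ℝ, 0 < δ → UnifSmall (fun n => t n * δ)
    (fun n x => mtail (convPow (Measure.map (X 0) ℙ) n) x / (n * tail (X 0) x) - 1)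
  /- C3 -/
  mdep : MDep X m
  anti : ∀ ε : ℝ, 0 < ε → ∀ h : ℕ, 1 ≤ h → h ≤ m →
    Tendsto (fun x => pr {ω | ε * g x < |X 0 ω| ∧ ε * x < |X h ω|} / tail (X 0) x)
      atTop (𝓝 0)

/-- Condition (RV) of Mikosch–Rodionov. -/
structure CondRV (X : ℕ → Ω → ℝ) (m : ℕ) (α : ℝ) (pp pm : ℝ) (t : ℕ → ℝ) : Prop where
  /- RV1 -/
  t_growth : Tendsto (fun n : ℕ => t n / Real.sqrt (n * Real.log n)) atTop atTop
  /- RV2 -/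
  alpha_gt_two : 2 < α
  rv : RegVaryingTail (X 0) α
  balance : TailBalance (X 0) pp pm
  /- RV3 -/
  mdep : MDep X m
  anti : ∀ h : ℕ, 1 ≤ h → h ≤ m →
    Tendsto (fun x => pr {ω | x < |X h ω| ∧ x < |X 0 ω|} / atail (X 0) x) atTop (𝓝 0)

/-- A (mean-zero or general) Gaussian process: all finite linear combinations
are one-dimensional Gaussian. -/
def GaussianProcess (Y : ℕ → Ω → ℝ) : Prop :=
  ∀ (s : Finset ℕ) (c : ℕ → ℝ), ∃ (mu : ℝ) (v : ℝ≥0),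
    Measure.map (fun ω => ∑ i ∈ s, c i * Y i ω) ℙ = gaussianReal mu v

/-- Entries of the sample covariance matrix: `S_{ij}^{(n)} = ∑_{t<n} X_{it} X_{jt}`. -/
def sij (X : ℕ → ℕ → Ω → ℝ) (i j n : ℕ) (ω : Ω) : ℝ :=
  ∑ t ∈ Finset.range n, X i t ω * X j t ω

/-- `max_{i ≤ p} (S_{ii}^{(n)} - n e)`. -/
noncomputable def diagMax (X : ℕ → ℕ → Ω → ℝ) (p n : ℕ) (e : ℝ) (ω : Ω) : ℝ :=
  ⨆ i : Fin p, (sij X i i n ω - n * e)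

/-- `max_{1 ≤ i < j ≤ p} |S_{ij}^{(n)} - n e|`. -/
noncomputable def offMaxAbs (X : ℕ → ℕ → Ω → ℝ) (p n : ℕ) (e : ℝ) (ω : Ω) : ℝ :=
  ⨆ q : {q : Fin p × Fin p // q.1 < q.2}, |sij X q.1.1 q.1.2 n ω - n * e|

/-- `max_{1 ≤ i < j ≤ p} (S_{ij}^{(n)} - n e)`. -/
noncomputable def offMax (X : ℕ → ℕ → Ω → ℝ) (p n : ℕ) (e : ℝ) (ω : Ω) : ℝ :=
  ⨆ q : {q : Fin p × Fin p // q.1 < q.2}, (sij X q.1.1 q.1.2 n ω - n * e)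

/-- The rows `(X_{i·})` of the field are iid sequences. -/
def RowsIID (X : ℕ → ℕ → Ω → ℝ) : Prop :=
  iIndepFun (fun i ω => fun t => X i t ω) ℙ ∧
  ∀ i, Measure.map (fun ω => fun t => X i t ω) ℙ
      = Measure.map (fun ω => fun t => X 0 t ω) ℙ

/-!
The rows are iid, so `P(max_{i<p} (S_ii - n E X²) ≤ u) = (1 - P(S_11 - n E X² > u))^p` and
`P(max_{i<k} X_{i0}² ≤ u) = (1 - P(X² > u))^k`. As `k log (1 - q) ~ -k q` when `q → 0`,
`(1 - q_k)^k → L > 0` iff `k q_k → -log L`. Hence (i) says `k P(X² > c_k x + d_k) → e^{-x}`;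
along `k = np` and combined with (ii) this gives `p P(S_11 - n E X² > c_{np} x + d_{np}) → e^{-x}`,
i.e. the Gumbel limit of the diagonal maximum. For the off-diagonal maximum, a union bound over
the fewer than `p²` pairs `i < j`, each `S_ij` distributed as `S_12`, and (iii) give
`P(max_{i<j} S_ij > …) ≤ C p² n P(X₁X₂ > …) → 0`.
-/

section Limits
variable {α : Type*} {l : Filter α}

lemma isEquivalent_log_one_add : (fun x : ℝ => Real.log (1 + x)) ~[𝓝 0] id := by
  have h := hasDerivAt_iff_isLittleO_nhds_zero.1 (Real.hasDerivAt_log one_ne_zero)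
  simp only [Real.log_one, sub_zero, inv_one, smul_eq_mul, mul_one] at h
  exact h

lemma tendsto_zero_of_tendsto_natCast_mul {k : α → ℕ} {f : α → ℝ} {t : ℝ}
    (hk : Tendsto k l atTop) (h : Tendsto (fun a => k a * f a) l (𝓝 t)) :
    Tendsto f l (𝓝 0) := by
  have hinv := ((tendsto_natCast_atTop_atTop (R := ℝ)).comp hk).inv_tendsto_atTop
  simpa using (h.mul hinv).congr' <| (hk.eventually_ne_atTop 0).mono fun a ha => by
    simp only [Pi.inv_apply, Function.comp_apply]
    field_simp

lemma isEquivalent_mul_log_one_sub {k q : α → ℝ} (hq : Tendsto q l (𝓝 0)) :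
    (fun a => k a * Real.log (1 - q a)) ~[l] fun a => -(k a * q a) := by
  have hq' : Tendsto (fun a => -q a) l (𝓝 0) := by simpa using hq.neg
  have h := (IsEquivalent.refl (u := k)).mul (isEquivalent_log_one_add.comp_tendsto hq')
  convert h using 1 <;> ext a <;> simp [sub_eq_add_neg]

lemma tendsto_one_sub_pow_of_tendsto_mul {k : α → ℕ} {q : α → ℝ} {t : ℝ}
    (hk : Tendsto k l atTop) (h : Tendsto (fun a => k a * q a) l (𝓝 t)) :
    Tendsto (fun a => (1 - q a) ^ k a) l (𝓝 (Real.exp (-t))) := by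
  have hq := tendsto_zero_of_tendsto_natCast_mul hk h
  have hlog := (isEquivalent_mul_log_one_sub hq).tendsto_nhds_iff.2 h.neg
  refine (Real.continuous_exp.tendsto _ |>.comp hlog).congr' ?_
  filter_upwards [hq.eventually (gt_mem_nhds one_pos)] with a ha
  rw [Function.comp_apply, ← Real.log_pow, Real.exp_log (pow_pos (by linarith) _)]

lemma tendsto_mul_of_tendsto_one_sub_pow {k : α → ℕ} {q : α → ℝ} {L : ℝ}
    (hk : Tendsto k l atTop) (hq : ∀ a, q a ≤ 1) (hL : 0 < L)
    (h : Tendsto (fun a => (1 - q a) ^ k a) l (𝓝 L)) :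
    Tendsto (fun a => k a * q a) l (𝓝 (-Real.log L)) := by
  have hpos : ∀ᶠ a in l, 0 < 1 - q a := by
    filter_upwards [h.eventually (lt_mem_nhds hL), hk.eventually_ne_atTop 0] with a ha hka
    refine (sub_nonneg.2 (hq a)).lt_of_ne fun h0 => ?_
    rw [← h0, zero_pow hka] at ha
    exact lt_irrefl _ ha
  have hlog : Tendsto (fun a => k a * Real.log (1 - q a)) l (𝓝 (Real.log L)) :=
    ((Real.continuousAt_log hL.ne').tendsto.comp h).congr' <| hpos.mono fun a _ => by
      simp [Real.log_pow]
  have hq0 : Tendsto q l (𝓝 0) := by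
    have h1 := (Real.continuous_exp.tendsto _).comp (tendsto_zero_of_tendsto_natCast_mul hk hlog)
    have h2 : Tendsto (fun a => 1 - q a) l (𝓝 1) := by
      rw [Real.exp_zero] at h1
      exact h1.congr' (hpos.mono fun a ha => Real.exp_log ha)
    simpa using h2.const_sub 1
  simpa using ((isEquivalent_mul_log_one_sub hq0).tendsto_nhds_iff.1 hlog).neg

end Limits

lemma tail_eq_of_identDistrib {f g : Ω → ℝ} (h : IdentDistrib f g ℙ ℙ) : tail f = tail g :=
  funext fun _ => congrArg ENNReal.toReal (h.measure_mem_eq measurableSet_Ioi)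

lemma setOf_inv_mul_sub_le {α : Type*} {a b x : ℝ} (ha : 0 < a) (f : α → ℝ) :
    {ω | a⁻¹ * (f ω - b) ≤ x} = {ω | f ω ≤ a * x + b} :=
  Set.ext fun _ => (inv_mul_le_iff₀ ha).trans sub_le_iff_le_add

lemma pr_lt_iSup_le_sum {ι : Type*} [Fintype ι] [Nonempty ι] (f : ι → Ω → ℝ) (u : ℝ) :
    pr {ω | u < ⨆ i, f i ω} ≤ ∑ i, tail (f i) u := by
  have hset : {ω | u < ⨆ i, f i ω} = ⋃ i, {ω | u < f i ω} := by
    ext ω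
    simp [lt_ciSup_iff (Finite.bddAbove_range _)]
  rw [pr, hset]
  exact measureReal_iUnion_fintype_le _

lemma pr_iSup_le_eq_pow [IsProbabilityMeasure (ℙ : Measure Ω)] {g : ℕ → Ω → ℝ}
    (hind : iIndepFun g ℙ) (hid : ∀ i, IdentDistrib (g i) (g 0) ℙ ℙ) {k : ℕ} (hk : k ≠ 0)
    (u : ℝ) :
    pr {ω | (⨆ i : Fin k, g i ω) ≤ u} = (1 - tail (g 0) u) ^ k := by
  have : Nonempty (Fin k) := ⟨⟨0, Nat.pos_of_ne_zero hk⟩⟩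
  have hset : {ω | (⨆ i : Fin k, g i ω) ≤ u}
      = ⋂ i ∈ Finset.range k, g i ⁻¹' Iic u := by
    ext ω
    simp [ciSup_le_iff (Finite.bddAbove_range _), Fin.forall_iff]
  have hcompl : {ω | u < g 0 ω} = (g 0 ⁻¹' Iic u)ᶜ := by ext; simp
  rw [pr, hset, hind.meas_biInter fun i _ => ⟨Iic u, measurableSet_Iic, rfl⟩,
    Finset.prod_congr rfl fun i _ => (hid i).measure_mem_eq measurableSet_Iic,
    Finset.prod_const, Finset.card_range, ENNReal.toReal_pow, tail, pr, hcompl,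
    ← measureReal_def, ← measureReal_def,
    probReal_compl_eq_one_sub₀ ((hid 0).aemeasurable_fst.nullMeasurable measurableSet_Iic),
    sub_sub_cancel]

def row (X : ℕ → ℕ → Ω → ℝ) (i : ℕ) (ω : Ω) : ℕ → ℝ := fun t => X i t ω

section Rows

variable {X : ℕ → ℕ → Ω → ℝ}

lemma measurable_row (hX : ∀ i t, Measurable (X i t)) (i : ℕ) : Measurable (row X i) :=
  measurable_pi_lambda _ (hX i)

lemma RowsIID.iIndepFun_comp (h : RowsIID X) {f : (ℕ → ℝ) → ℝ} (hf : Measurable f) :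
    iIndepFun (fun i ω => f (row X i ω)) ℙ :=
  h.1.comp (fun _ => f) fun _ => hf

lemma RowsIID.identDistrib_comp (h : RowsIID X) (hX : ∀ i t, Measurable (X i t))
    {f : (ℕ → ℝ) → ℝ} (hf : Measurable f) (i : ℕ) :
    IdentDistrib (fun ω => f (row X i ω)) (fun ω => f (row X 0 ω)) ℙ ℙ :=
  IdentDistrib.comp ⟨(measurable_row hX i).aemeasurable, (measurable_row hX 0).aemeasurable,
    h.2 i⟩ hf

variable [IsProbabilityMeasure (ℙ : Measure Ω)]

lemma RowsIID.identDistrib_pair (h : RowsIID X) (hX : ∀ i t, Measurable (X i t))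
    {F : (ℕ → ℝ) × (ℕ → ℝ) → ℝ} (hF : Measurable F) {i j : ℕ} (hij : i ≠ j) :
    IdentDistrib (fun ω => F (row X i ω, row X j ω)) (fun ω => F (row X 0 ω, row X 1 ω))
      ℙ ℙ := by
  have hlaw : ∀ {a b : ℕ}, a ≠ b → Measure.map (fun ω => (row X a ω, row X b ω)) ℙ
      = (Measure.map (row X 0) ℙ).prod (Measure.map (row X 0) ℙ) := fun {a b} hab => by
    rw [(indepFun_iff_map_prod_eq_prod_map_map (measurable_row hX a).aemeasurable
      (measurable_row hX b).aemeasurable).1 (h.1.indepFun hab)]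
    exact congrArg₂ _ (h.2 a) (h.2 b)
  refine IdentDistrib.comp ⟨?_, ?_, (hlaw hij).trans (hlaw zero_ne_one).symm⟩ hF <;>
    exact ((measurable_row hX _).prodMk (measurable_row hX _)).aemeasurable

lemma RowsIID.pr_iSup_le_eq_pow (h : RowsIID X) (hX : ∀ i t, Measurable (X i t))
    {f : (ℕ → ℝ) → ℝ} (hf : Measurable f) {k : ℕ} (hk : k ≠ 0) (u : ℝ) :
    pr {ω | (⨆ i : Fin k, f (row X i ω)) ≤ u} = (1 - tail (fun ω => f (row X 0 ω)) u) ^ k :=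
  PLD.pr_iSup_le_eq_pow (h.iIndepFun_comp hf) (h.identDistrib_comp hX hf) hk u

lemma RowsIID.pr_lt_offMax_le (h : RowsIID X) (hX : ∀ i t, Measurable (X i t)) {p : ℕ}
    (hp : 2 ≤ p) (n : ℕ) (e y : ℝ) :
    pr {ω | y < offMax X p n e ω} ≤ p ^ 2 * tail (fun ω => sij X 0 1 n ω - n * e) y := by
  have : Nonempty {q : Fin p × Fin p // q.1 < q.2} :=
    ⟨⟨(⟨0, by omega⟩, ⟨1, by omega⟩), by simp [Fin.lt_def]⟩⟩
  have htail : ∀ q : {q : Fin p × Fin p // q.1 < q.2},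
      tail (fun ω => sij X q.1.1 q.1.2 n ω - n * e) y
        = tail (fun ω => sij X 0 1 n ω - n * e) y := fun q =>
    congrFun (tail_eq_of_identDistrib (h.identDistrib_pair hX
      (F := fun ab => ∑ t ∈ Finset.range n, ab.1 t * ab.2 t - n * e) (by fun_prop)
      (Fin.val_injective.ne q.2.ne))) y
  have hcard : (Fintype.card {q : Fin p × Fin p // q.1 < q.2} : ℝ) ≤ p ^ 2 := by
    have := Fintype.card_subtype_le (fun q : Fin p × Fin p => q.1 < q.2)
    rw [Fintype.card_prod, Fintype.card_fin] at this
    exact_mod_cast this.trans_eq (sq p).symm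
  calc pr {ω | y < offMax X p n e ω}
      ≤ ∑ q : {q : Fin p × Fin p // q.1 < q.2},
          tail (fun ω => sij X q.1.1 q.1.2 n ω - n * e) y :=
        pr_lt_iSup_le_sum _ y
    _ = Fintype.card {q : Fin p × Fin p // q.1 < q.2}
          * tail (fun ω => sij X 0 1 n ω - n * e) y := by
        simp only [htail, Finset.sum_const, Finset.card_univ, nsmul_eq_mul]
    _ ≤ p ^ 2 * tail (fun ω => sij X 0 1 n ω - n * e) y :=
        mul_le_mul_of_nonneg_right hcard measureReal_nonneg

end Rows

section Maxima

variable [IsProbabilityMeasure (ℙ : Measure Ω)] {X : ℕ → ℕ → Ω → ℝ}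

theorem tendsto_pr_le_offMax (hX : ∀ i t, Measurable (X i t)) (hrows : RowsIID X)
    {p : ℕ → ℕ} (hp : Tendsto p atTop atTop) {a b : ℕ → ℝ} (ha : ∀ n, 0 < a n)
    {Y : Ω → ℝ} {e x M C : ℝ} (hxM : x < M)
    (hbound : ∀ᶠ n : ℕ in atTop, tail (fun ω => sij X 0 1 n ω - n * e) (a n * x + b n)
      ≤ C * n * tail Y (a n * x + b n))
    (hsmall : Tendsto (fun n : ℕ => (p n : ℝ) ^ 2 * (n * tail Y (a n * x + b n))) atTop
      (𝓝 0)) :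
    Tendsto (fun n : ℕ => pr {ω | M ≤ (a n)⁻¹ * (offMax X (p n) n e ω - b n)}) atTop
      (𝓝 0) := by
  refine squeeze_zero' (Eventually.of_forall fun _ => measureReal_nonneg) ?_
    (by simpa using hsmall.const_mul C)
  filter_upwards [hbound, hp.eventually_ge_atTop 2] with n hn hp2
  have hsub : {ω | M ≤ (a n)⁻¹ * (offMax X (p n) n e ω - b n)}
      ⊆ {ω | a n * x + b n < offMax X (p n) n e ω} := fun ω hω => by
    have := (le_inv_mul_iff₀ (ha n)).1 hω
    show a n * x + b n < _
    nlinarith [mul_lt_mul_of_pos_left hxM (ha n)]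
  calc pr {ω | M ≤ (a n)⁻¹ * (offMax X (p n) n e ω - b n)}
      ≤ pr {ω | a n * x + b n < offMax X (p n) n e ω} := measureReal_mono hsub
    _ ≤ (p n : ℝ) ^ 2 * tail (fun ω => sij X 0 1 n ω - n * e) (a n * x + b n) :=
        hrows.pr_lt_offMax_le hX hp2 n e _
    _ ≤ (p n : ℝ) ^ 2 * (C * n * tail Y (a n * x + b n)) := by gcongr
    _ = C * ((p n : ℝ) ^ 2 * (n * tail Y (a n * x + b n))) := by ring

theorem tendsto_mul_tail_sq_of_gumbel (hX : ∀ i t, Measurable (X i t)) (hrows : RowsIID X)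
    {c d : ℕ → ℝ} (hc : ∀ n, 0 < c n) {x : ℝ}
    (hgumbel : Tendsto (fun n : ℕ =>
      pr {ω | (c n)⁻¹ * ((⨆ i : Fin n, (X i 0 ω) ^ 2) - d n) ≤ x}) atTop
        (𝓝 (Real.exp (-Real.exp (-x))))) :
    Tendsto (fun n : ℕ => n * tail (fun ω => (X 0 0 ω) ^ 2) (c n * x + d n)) atTop
      (𝓝 (Real.exp (-x))) := by
  have hpow : Tendsto (fun n => (1 - tail (fun ω => (X 0 0 ω) ^ 2) (c n * x + d n)) ^ n) atTop
      (𝓝 (Real.exp (-Real.exp (-x)))) :=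
    hgumbel.congr' <| (eventually_ne_atTop 0).mono fun n hn => by
      rw [setOf_inv_mul_sub_le (hc n)]
      exact hrows.pr_iSup_le_eq_pow hX (f := fun a => a 0 ^ 2) (by fun_prop) hn _
  have h := tendsto_mul_of_tendsto_one_sub_pow tendsto_id (fun _ => measureReal_le_one)
    (Real.exp_pos _) hpow
  rwa [Real.log_exp, neg_neg] at h

theorem tendsto_pr_diagMax_le (hX : ∀ i t, Measurable (X i t)) (hrows : RowsIID X)
    {p : ℕ → ℕ} (hp : Tendsto p atTop atTop) {c d : ℕ → ℝ} (hc : ∀ n, 0 < c n)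
    {x e : ℝ}
    (hgumbel : Tendsto (fun n : ℕ =>
      pr {ω | (c n)⁻¹ * ((⨆ i : Fin n, (X i 0 ω) ^ 2) - d n) ≤ x}) atTop
        (𝓝 (Real.exp (-Real.exp (-x)))))
    (hdiag : Tendsto (fun n : ℕ =>
      tail (fun ω => sij X 0 0 n ω - n * e) (c (n * p n) * x + d (n * p n))
        / (n * tail (fun ω => (X 0 0 ω) ^ 2) (c (n * p n) * x + d (n * p n)))) atTop (𝓝 1)) :
    Tendsto (fun n : ℕ =>
      pr {ω | (c (n * p n))⁻¹ * (diagMax X (p n) n e ω - d (n * p n)) ≤ x}) atTop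
        (𝓝 (Real.exp (-Real.exp (-x)))) := by
  have hsq : Tendsto (fun n : ℕ => (p n : ℝ) *
      (n * tail (fun ω => (X 0 0 ω) ^ 2) (c (n * p n) * x + d (n * p n)))) atTop
        (𝓝 (Real.exp (-x))) :=
    ((tendsto_mul_tail_sq_of_gumbel hX hrows hc hgumbel).comp
      (tendsto_id.atTop_mul_atTop₀ hp)).congr fun n => by
      simp only [Function.comp_apply, id_eq, Nat.cast_mul]
      ring
  have hdiagTail : Tendsto (fun n : ℕ => (p n : ℝ) *
      tail (fun ω => sij X 0 0 n ω - n * e) (c (n * p n) * x + d (n * p n))) atTop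
        (𝓝 (Real.exp (-x))) :=
    (IsEquivalent.refl.mul (isEquivalent_of_tendsto_one hdiag)).tendsto_nhds_iff.2 hsq
  refine (tendsto_one_sub_pow_of_tendsto_mul hp hdiagTail).congr' ?_
  filter_upwards [hp.eventually_ne_atTop 0] with n hn
  rw [setOf_inv_mul_sub_le (hc _)]
  exact (hrows.pr_iSup_le_eq_pow hX (f := fun a => ∑ t ∈ Finset.range n, a t * a t - n * e)
    (by fun_prop) hn _).symm

end Maxima

theorem statement7_general
    {Ω : Type*} [MeasureSpace Ω] [IsProbabilityMeasure (ℙ : Measure Ω)]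
    (X : ℕ → ℕ → Ω → ℝ) (hmeas : ∀ i t, Measurable (X i t))
    (hrows : RowsIID X)
    (p : ℕ → ℕ) (hp : Tendsto p atTop atTop)
    (c : ℕ → ℝ) (d : ℕ → ℝ) (hc_pos : ∀ n, 0 < c n)
    -- (i): the distribution of `X²` is in `MDA(Λ)`
    (hgumbel : ∀ x : ℝ,
      Tendsto (fun n : ℕ =>
          pr {ω | (c n)⁻¹ * ((⨆ i : Fin n, (X i 0 ω) ^ 2) - d n) ≤ x}) atTop
        (𝓝 (Real.exp (-Real.exp (-x)))))
    -- (ii): tail asymptotics for the diagonal entries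
    (hdiag : ∀ x : ℝ,
      Tendsto (fun n : ℕ =>
          tail (fun ω => sij X 0 0 n ω - n * ∫ ω', (X 0 0 ω') ^ 2)
              (c (n * p n) * x + d (n * p n))
            / (n * tail (fun ω => (X 0 0 ω) ^ 2) (c (n * p n) * x + d (n * p n))))
        atTop (𝓝 1))
    -- (iii): bound for the off-diagonal entries
    (hoff : ∃ C : ℝ, 0 < C ∧
      (∀ x : ℝ, ∀ᶠ n : ℕ in atTop,
        tail (fun ω => sij X 0 1 n ω - n * (∫ ω', X 0 0 ω') ^ 2)
            (c (n * p n) * x + d (n * p n))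
          ≤ C * n * tail (fun ω => X 0 0 ω * X 1 0 ω)
              (c (n * p n) * x + d (n * p n))) ∧
      (∀ x : ℝ,
        Tendsto (fun n : ℕ =>
          (p n : ℝ) ^ 2 * (n * tail (fun ω => X 0 0 ω * X 1 0 ω)
            (c (n * p n) * x + d (n * p n)))) atTop (𝓝 0))) :
    -- (5.5): the off-diagonal maximum tends to `-∞` in probability
    (∀ M : ℝ,
      Tendsto (fun n : ℕ =>
        pr {ω | M ≤ (c (n * p n))⁻¹ *
          (offMax X (p n) n ((∫ ω', X 0 0 ω') ^ 2) ω - d (n * p n))}) atTop (𝓝 0)) ∧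
    -- (5.6): Gumbel limit for the diagonal maximum
    (∀ x : ℝ,
      Tendsto (fun n : ℕ =>
        pr {ω | (c (n * p n))⁻¹ *
          (diagMax X (p n) n (∫ ω', (X 0 0 ω') ^ 2) ω - d (n * p n)) ≤ x}) atTop
        (𝓝 (Real.exp (-Real.exp (-x))))) := by
  obtain ⟨C, -, hbound, hsmall⟩ := hoff
  exact ⟨fun M => tendsto_pr_le_offMax hmeas hrows hp (fun _ => hc_pos _) (sub_one_lt M)
      (hbound _) (hsmall _),
    fun x => tendsto_pr_diagMax_le hmeas hrows hp hc_pos (hgumbel x) (hdiag x)⟩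

/-- **Lemma 5.2** (sample covariance matrices, Gumbel case). -/
theorem statement7
    {Ω : Type*} [MeasureSpace Ω] [IsProbabilityMeasure (ℙ : Measure Ω)]
    (X : ℕ → ℕ → Ω → ℝ) (hmeas : ∀ i t, Measurable (X i t))
    (m : ℕ) (hrows : RowsIID X)
    (hstat : Stationary (X 0)) (hmdep : MDep (X 0) m)
    (p : ℕ → ℕ) (hp : Tendsto p atTop atTop)
    (c : ℕ → ℝ) (d : ℕ → ℝ) (hc_pos : ∀ n, 0 < c n)
    -- (i): the distribution of `X²` is in `MDA(Λ)`
    (hgumbel : ∀ x : ℝ,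
      Tendsto (fun n : ℕ =>
          pr {ω | (c n)⁻¹ * ((⨆ i : Fin n, (X i 0 ω) ^ 2) - d n) ≤ x}) atTop
        (𝓝 (Real.exp (-Real.exp (-x)))))
    -- (ii): tail asymptotics for the diagonal entries
    (hdiag : ∀ x : ℝ,
      Tendsto (fun n : ℕ =>
          tail (fun ω => sij X 0 0 n ω - n * ∫ ω', (X 0 0 ω') ^ 2)
              (c (n * p n) * x + d (n * p n))
            / (n * tail (fun ω => (X 0 0 ω) ^ 2) (c (n * p n) * x + d (n * p n))))
        atTop (𝓝 1))
    -- (iii): bound for the off-diagonal entries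
    (hoff : ∃ C : ℝ, 0 < C ∧
      (∀ x : ℝ, ∀ᶠ n : ℕ in atTop,
        tail (fun ω => sij X 0 1 n ω - n * (∫ ω', X 0 0 ω') ^ 2)
            (c (n * p n) * x + d (n * p n))
          ≤ C * n * tail (fun ω => X 0 0 ω * X 1 0 ω)
              (c (n * p n) * x + d (n * p n))) ∧
      (∀ x : ℝ,
        Tendsto (fun n : ℕ =>
          (p n : ℝ) ^ 2 * (n * tail (fun ω => X 0 0 ω * X 1 0 ω)
            (c (n * p n) * x + d (n * p n)))) atTop (𝓝 0))) :
    -- (5.5): the off-diagonal maximum tends to `-∞` in probability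
    (∀ M : ℝ,
      Tendsto (fun n : ℕ =>
        pr {ω | M ≤ (c (n * p n))⁻¹ *
          (offMax X (p n) n ((∫ ω', X 0 0 ω') ^ 2) ω - d (n * p n))}) atTop (𝓝 0)) ∧
    -- (5.6): Gumbel limit for the diagonal maximum
    (∀ x : ℝ,
      Tendsto (fun n : ℕ =>
        pr {ω | (c (n * p n))⁻¹ *
          (diagMax X (p n) n (∫ ω', (X 0 0 ω') ^ 2) ω - d (n * p n)) ≤ x}) atTop
        (𝓝 (Real.exp (-Real.exp (-x))))) :=
  statement7_general X hmeas hrows p hp c d hc_pos hgumbel hdiag hoff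

end PLD
end

section
/- Consider the stochastic volatility model X_t = σ_t Z_t, t∈ℤ, where (σ_t) is a positive stationary sequence independent of the iid sequence (Z_t), and |Z| is regularly varying with index α>0. If E[σ^{2α+δ}]<∞ for some δ>0, then for each h≥1, P(|X_h|>x, |X_0|>x) ≤ P((σ_h∨σ_0)(|Z_0|∧|Z_h|)>x) ~ E[(σ_h∨σ_0)^{2α}]·(P(|Z|>x))² as x→∞; since moreover P(|X|>x) ~ E[σ^{α}]·P(|Z|>x) (Breiman's lemma), it follows that P(|X_h|>x | |X_0|>x) → 0 for every h≥1, i.e. condition RV3 holds and (X_t) is asymptotically independent. -/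
open MeasureTheory ProbabilityTheory Filter Set Asymptotics
open scoped ENNReal NNReal Topology

namespace PLD

variable {Ω : Type*} [MeasureSpace Ω]

/-!
Breiman's lemma: writing `T` for the tail of `ξ`, independence gives
`P(ηξ > x) / T(x) = E[T(x/η) / T(x)]`. Regular variation makes the integrand tend to `η^ρ`,
and iterating the doubling inequality `T(z) ≤ 2^p T(2z)` (valid for large `z` whenever `p > ρ`)
yields Potter's bound `T(x/u) / T(x) ≤ C (1 + u^p)`, so dominated convergence applies once
`E[η^p] < ∞`.

For the stochastic volatility model, on `{|X_h| > x, |X_0| > x}` the larger of `σ_h, σ_0` times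
the smaller of `|Z_0|, |Z_h|` exceeds `x`. That minimum of two independent copies of `|Z|` has
tail `P(|Z| > x)²`, regularly varying of index `2α`, so Breiman's lemma bounds the joint
exceedance probability by `O(P(|Z| > x)²)`, while `P(|X_0| > x)` is of exact order
`P(|Z| > x) → 0`.
-/

lemma pr_nonneg (A : Set Ω) : 0 ≤ pr A := ENNReal.toReal_nonneg

lemma tail_nonneg (X : Ω → ℝ) (x : ℝ) : 0 ≤ tail X x := pr_nonneg _

lemma tail_eq_map {X : Ω → ℝ} (hX : Measurable X) (x : ℝ) :
    tail X x = (Measure.map X ℙ (Ioi x)).toReal := by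
  rw [Measure.map_apply hX measurableSet_Ioi]
  rfl

lemma tail_le_one [IsProbabilityMeasure (ℙ : Measure Ω)] (X : Ω → ℝ) (x : ℝ) :
    tail X x ≤ 1 :=
  ENNReal.toReal_le_of_le_ofReal zero_le_one (by simpa using prob_le_one)

lemma tail_min_eq_mul {X Y : Ω → ℝ} (hXY : IndepFun X Y) (x : ℝ) :
    tail (fun ω => min (X ω) (Y ω)) x = tail X x * tail Y x := by
  have hset : {ω | x < min (X ω) (Y ω)} = X ⁻¹' Ioi x ∩ Y ⁻¹' Ioi x := by
    ext ω
    simp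
  rw [tail, pr, hset, hXY.measure_inter_preimage_eq_mul _ _ measurableSet_Ioi measurableSet_Ioi,
    ENNReal.toReal_mul]
  rfl

section FiniteMeasure

variable [IsFiniteMeasure (ℙ : Measure Ω)]

lemma pr_mono_ae {A B : Set Ω} (h : A ≤ᵐ[ℙ] B) : pr A ≤ pr B :=
  ENNReal.toReal_mono (measure_ne_top _ _) (measure_mono_ae h)

lemma tail_antitone (X : Ω → ℝ) : Antitone (tail X) := fun _ _ hxy =>
  pr_mono_ae (Eventually.of_forall fun _ h => hxy.trans_lt h)

lemma tendsto_tail_atTop {X : Ω → ℝ} (hX : Measurable X) :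
    Tendsto (tail X) atTop (𝓝 0) := by
  have hlim := tendsto_measure_iInter_atTop (μ := ℙ) (s := fun x : ℝ => {ω | x < X ω})
    (fun _ => (measurableSet_lt measurable_const hX).nullMeasurableSet)
    (fun _ _ hxy _ h => hxy.trans_lt h) ⟨0, measure_ne_top _ _⟩
  have hempty : (⋂ x : ℝ, {ω | x < X ω}) = ∅ :=
    eq_empty_of_forall_notMem fun ω hω => lt_irrefl (X ω) (mem_iInter.1 hω (X ω))
  rw [hempty, measure_empty] at hlim
  exact (ENNReal.tendsto_toReal ENNReal.zero_ne_top).comp hlim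

lemma tail_mul_eq_integral {η ξ : Ω → ℝ} (hη : Measurable η) (hξ : Measurable ξ)
    (hind : IndepFun η ξ) (hpos : ∀ᵐ ω, 0 < η ω) (x : ℝ) :
    tail (fun ω => η ω * ξ ω) x = ∫ u, tail ξ (x / u) ∂(Measure.map η ℙ) := by
  set μ := Measure.map η ℙ
  set ν := Measure.map ξ ℙ
  have hA : MeasurableSet {q : ℝ × ℝ | x < q.1 * q.2} :=
    measurableSet_lt measurable_const (measurable_fst.mul measurable_snd)
  have hprod :
      ℙ {ω | x < η ω * ξ ω} = ∫⁻ u, ν (Prod.mk u ⁻¹' {q | x < q.1 * q.2}) ∂μ := by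
    rw [← Measure.prod_apply hA, ← (indepFun_iff_map_prod_eq_prod_map_map hη.aemeasurable
      hξ.aemeasurable).1 hind, Measure.map_apply (hη.prodMk hξ) hA]
    rfl
  have hsection : ∀ᵐ u ∂μ, ν (Prod.mk u ⁻¹' {q | x < q.1 * q.2}) = ν (Ioi (x / u)) := by
    filter_upwards [(ae_map_iff hη.aemeasurable measurableSet_Ioi).2 hpos] with u hu
    congr 1
    ext v
    simp only [mem_preimage, mem_ofPred_eq, mem_Ioi, div_lt_iff₀ hu, mul_comm v]
  have hmeas : Measurable fun u : ℝ => ν (Ioi (x / u)) :=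
    (Antitone.measurable fun _ _ hab => measure_mono (Ioi_subset_Ioi hab)).comp
      (measurable_const.div measurable_id)
  rw [tail, pr, hprod, lintegral_congr_ae hsection,
    ← integral_toReal hmeas.aemeasurable (Eventually.of_forall fun _ => measure_lt_top _ _)]
  simp only [tail_eq_map hξ, ν]

lemma integrable_rpow_of_le {η : Ω → ℝ} (hη : Measurable η) (hnn : ∀ᵐ ω, 0 ≤ η ω)
    {p q : ℝ} (hp : 0 ≤ p) (hpq : p ≤ q) (hq : Integrable fun ω => η ω ^ q) :
    Integrable fun ω => η ω ^ p := by
  refine ((integrable_const 1).add hq).mono' (hη.pow_const p).aestronglyMeasurable ?_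
  filter_upwards [hnn] with ω hω
  rw [Real.norm_of_nonneg (Real.rpow_nonneg hω p), Pi.add_apply]
  rcases le_or_gt (η ω) 1 with h | h
  · linarith [Real.rpow_le_one hω h hp, Real.rpow_nonneg hω q]
  · linarith [Real.rpow_le_rpow_of_exponent_le h.le hpq]

end FiniteMeasure

lemma RegularlyVaryingFun.mul {f g : ℝ → ℝ} {ρ ρ' : ℝ} (hf : RegularlyVaryingFun f ρ)
    (hg : RegularlyVaryingFun g ρ') : RegularlyVaryingFun (f * g) (ρ + ρ') := fun c hc => by
  simpa only [Pi.mul_apply, mul_div_mul_comm, Real.rpow_add hc] using (hf c hc).mul (hg c hc)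

lemma RegVaryingTail.regularlyVaryingFun {X : Ω → ℝ} {α : ℝ} (h : RegVaryingTail X α) :
    RegularlyVaryingFun (tail X) (-α) := by
  obtain ⟨L, hL, hT⟩ := h
  intro c hc
  have key : ∀ᶠ x in atTop, L (c * x) / L x * c ^ (-α) = tail X (c * x) / tail X x := by
    filter_upwards [hT, (tendsto_id.const_mul_atTop hc).eventually hT, eventually_gt_atTop 0]
      with x h₁ h₂ hx
    dsimp only [id] at h₂
    have hx' : x ^ (-α) ≠ 0 := (Real.rpow_pos_of_pos hx _).ne'
    rw [h₁, h₂, Real.mul_rpow hc.le hx.le, ← mul_assoc, mul_div_mul_right _ _ hx',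
      mul_div_right_comm]
  simpa using ((hL c hc).mul_const (c ^ (-α))).congr' key

section Potter

variable {T : ℝ → ℝ} {ρ p : ℝ}

lemma RegularlyVaryingFun.eventually_pos_and_le_doubling (hT : RegularlyVaryingFun T (-ρ))
    (hnn : ∀ x, 0 ≤ T x) (hp : ρ < p) :
    ∀ᶠ z in atTop, 0 < T z ∧ T z ≤ 2 ^ p * T (2 * z) := by
  have hlt : (2 : ℝ) ^ (-p) < 2 ^ (-ρ) :=
    Real.rpow_lt_rpow_of_exponent_lt one_lt_two (by linarith)
  filter_upwards [(hT 2 two_pos).eventually (eventually_gt_nhds hlt)] with z hz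
  have h2p : (0 : ℝ) < 2 ^ (-p) := by positivity
  have hTz : 0 < T z := (hnn z).lt_of_ne fun h => by rw [← h, div_zero] at hz; linarith
  rw [lt_div_iff₀ hTz] at hz
  refine ⟨hTz, ?_⟩
  calc T z = 2 ^ p * (2 ^ (-p) * T z) := by
        rw [← mul_assoc, ← Real.rpow_add two_pos, add_neg_cancel, Real.rpow_zero, one_mul]
    _ ≤ 2 ^ p * T (2 * z) := by gcongr

variable {x₀ : ℝ}

lemma le_rpow_mul_of_le_doubling (hanti : Antitone T) (hnn : ∀ x, 0 ≤ T x) (hp : 0 ≤ p)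
    (H : ∀ z, x₀ ≤ z → T z ≤ 2 ^ p * T (2 * z)) (hx₀ : 0 ≤ x₀) {z u : ℝ}
    (hz : x₀ ≤ z) (hu : 1 ≤ u) :
    T z ≤ 2 ^ p * u ^ p * T (u * z) := by
  have hiter : ∀ k : ℕ, ∀ z, x₀ ≤ z → T z ≤ (2 ^ p) ^ k * T (2 ^ k * z) := by
    intro k
    induction k with
    | zero => simp
    | succ k ih =>
      intro z hz
      calc T z ≤ 2 ^ p * T (2 * z) := H z hz
        _ ≤ 2 ^ p * ((2 ^ p) ^ k * T (2 ^ k * (2 * z))) := by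
          gcongr
          exact ih _ (by linarith)
        _ = (2 ^ p) ^ (k + 1) * T (2 ^ (k + 1) * z) := by
          rw [pow_succ, pow_succ, mul_assoc, mul_left_comm, mul_assoc (2 ^ k : ℝ)]
  obtain ⟨n, hn, hn'⟩ := exists_nat_pow_near hu one_lt_two
  have hz₀ : 0 ≤ z := hx₀.trans hz
  have hpow : ((2 : ℝ) ^ p) ^ (n + 1) ≤ 2 ^ p * u ^ p := by
    rw [← Real.rpow_mul_natCast two_pos.le, mul_comm, Real.rpow_natCast_mul two_pos.le,
      ← Real.mul_rpow two_pos.le (by linarith)]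
    gcongr
    rw [pow_succ, mul_comm]
    gcongr
  calc T z ≤ (2 ^ p) ^ (n + 1) * T (2 ^ (n + 1) * z) := hiter _ z hz
    _ ≤ (2 ^ p) ^ (n + 1) * T (u * z) := by gcongr; exact hanti (by gcongr)
    _ ≤ 2 ^ p * u ^ p * T (u * z) := by gcongr; exact hnn _

lemma apply_div_le_of_le_doubling (hanti : Antitone T) (hnn : ∀ x, 0 ≤ T x) (hp : 0 ≤ p)
    (H : ∀ z, x₀ ≤ z → T z ≤ 2 ^ p * T (2 * z)) (hle : ∀ x, T x ≤ 1)
    (hx₀ : 0 < x₀) (hTx₀ : 0 < T x₀) {x u : ℝ} (hx : x₀ ≤ x) (hu : 1 ≤ u) :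
    T (x / u) ≤ 2 ^ p / T x₀ * u ^ p * T x := by
  have hu₀ : 0 < u := by linarith
  have hTx : 0 ≤ T x := hnn x
  rcases le_or_gt x₀ (x / u) with hxu | hxu
  · calc T (x / u) ≤ 2 ^ p * u ^ p * T (u * (x / u)) :=
          le_rpow_mul_of_le_doubling hanti hnn hp H hx₀.le hxu hu
      _ = 2 ^ p * u ^ p * T x := by rw [mul_div_cancel₀ _ hu₀.ne']
      _ ≤ 2 ^ p / T x₀ * u ^ p * T x := by
          gcongr
          exact le_div_self (by positivity) hTx₀ (hle x₀)
  -- Here `x ≤ u x₀`: bound `T x` from below by comparing it with `T x₀`.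
  have hx₀x : T x₀ ≤ 2 ^ p * u ^ p * T x := by
    calc T x₀ ≤ 2 ^ p * (x / x₀) ^ p * T (x / x₀ * x₀) :=
          le_rpow_mul_of_le_doubling hanti hnn hp H hx₀.le le_rfl ((one_le_div hx₀).2 hx)
      _ ≤ 2 ^ p * u ^ p * T x := by
          rw [div_mul_cancel₀ _ hx₀.ne']
          have : 0 ≤ x / x₀ := div_nonneg (by linarith) hx₀.le
          gcongr
          rw [div_le_iff₀ hx₀]
          linarith [(div_lt_iff₀ hu₀).1 hxu, mul_comm x₀ u]
  calc T (x / u) ≤ 1 := hle _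
    _ ≤ 2 ^ p * u ^ p * T x / T x₀ := by rwa [le_div_iff₀ hTx₀, one_mul]
    _ = 2 ^ p / T x₀ * u ^ p * T x := by ring

end Potter

lemma RegularlyVaryingFun.exists_div_le {T : ℝ → ℝ} {ρ p : ℝ}
    (hT : RegularlyVaryingFun T (-ρ)) (hanti : Antitone T) (hnn : ∀ x, 0 ≤ T x)
    (hle : ∀ x, T x ≤ 1) (hρ : 0 ≤ ρ) (hp : ρ < p) :
    ∃ C, ∀ᶠ x in atTop, ∀ u, 0 < u → T (x / u) / T x ≤ C * (1 + u ^ p) := by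
  obtain ⟨x₀, hx₀⟩ :=
    eventually_atTop.1 ((hT.eventually_pos_and_le_doubling hnn hp).and (eventually_ge_atTop 1))
  have hp₀ : 0 ≤ p := by linarith
  have hx₀1 : 1 ≤ x₀ := (hx₀ x₀ le_rfl).2
  have hTx₀ : 0 < T x₀ := (hx₀ x₀ le_rfl).1.1
  have H : ∀ z, x₀ ≤ z → T z ≤ 2 ^ p * T (2 * z) := fun z hz => (hx₀ z hz).1.2
  have hC : 1 ≤ 2 ^ p / T x₀ := (Real.one_le_rpow one_le_two hp₀).trans
    (le_div_self (by positivity) hTx₀ (hle x₀))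
  refine ⟨2 ^ p / T x₀, (eventually_ge_atTop x₀).mono fun x hx u hu => ?_⟩
  have hTx : 0 < T x := (hx₀ x hx).1.1
  have hup : 0 ≤ u ^ p := Real.rpow_nonneg hu.le p
  rw [div_le_iff₀ hTx]
  rcases le_or_gt u 1 with hu₁ | hu₁
  · calc T (x / u) ≤ T x := hanti (le_div_self (by linarith) hu hu₁)
      _ = 1 * 1 * T x := by ring
      _ ≤ 2 ^ p / T x₀ * (1 + u ^ p) * T x := by gcongr; linarith
  · have := apply_div_le_of_le_doubling hanti hnn hp₀ H hle (by linarith) hTx₀ hx hu₁.le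
    nlinarith

lemma integral_pos_of_ae_pos {α : Type*} [MeasurableSpace α] {μ : Measure α} [NeZero μ]
    {f : α → ℝ} (hf : ∀ᵐ x ∂μ, 0 < f x) (hfi : Integrable f μ) :
    0 < ∫ x, f x ∂μ := by
  rw [integral_pos_iff_support_of_nonneg_ae (hf.mono fun _ h => h.le) hfi]
  exact (Measure.measure_univ_pos.2 (NeZero.ne μ)).trans_le
    (measure_mono_ae (hf.mono fun _ hx _ => hx.ne'))

lemma integral_rpow_pos [IsProbabilityMeasure (ℙ : Measure Ω)] {η : Ω → ℝ}
    (hη : Measurable η) (hpos : ∀ᵐ ω, 0 < η ω) {p q : ℝ} (hp : 0 ≤ p) (hpq : p ≤ q)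
    (hq : Integrable fun ω => η ω ^ q) : 0 < ∫ ω, η ω ^ p :=
  integral_pos_of_ae_pos (hpos.mono fun _ h => Real.rpow_pos_of_pos h p)
    (integrable_rpow_of_le hη (hpos.mono fun _ h => h.le) hp hpq hq)

theorem breiman [IsProbabilityMeasure (ℙ : Measure Ω)] {η ξ : Ω → ℝ} (hη : Measurable η)
    (hξ : Measurable ξ) (hind : IndepFun η ξ) (hpos : ∀ᵐ ω, 0 < η ω) {ρ δ : ℝ}
    (hρ : 0 < ρ) (hδ : 0 < δ) (hmom : Integrable fun ω => η ω ^ (ρ + δ))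
    (hrv : RegularlyVaryingFun (tail ξ) (-ρ)) :
    Tendsto (fun x => tail (fun ω => η ω * ξ ω) x / ((∫ ω, η ω ^ ρ) * tail ξ x))
      atTop (𝓝 1) := by
  set μ := Measure.map η ℙ
  have hμpos : ∀ᵐ u ∂μ, 0 < u := (ae_map_iff hη.aemeasurable measurableSet_Ioi).2 hpos
  have hrpow : ∀ {r : ℝ}, 0 ≤ r → AEStronglyMeasurable (fun u : ℝ => u ^ r) μ :=
    fun hr => (Real.continuous_rpow_const hr).aestronglyMeasurable
  have hmomμ : Integrable (fun u : ℝ => u ^ (ρ + δ)) μ :=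
    (integrable_map_measure (hrpow (by linarith)) hη.aemeasurable).2 hmom
  obtain ⟨C, hC⟩ := hrv.exists_div_le (tail_antitone ξ) (tail_nonneg ξ) (tail_le_one ξ)
    hρ.le (lt_add_of_pos_right ρ hδ)
  have hlim : Tendsto (fun x => ∫ u, tail ξ (x / u) / tail ξ x ∂μ) atTop
      (𝓝 (∫ u, u ^ ρ ∂μ)) := by
    refine tendsto_integral_filter_of_dominated_convergence (fun u => C * (1 + u ^ (ρ + δ)))
      (Eventually.of_forall fun x => ?_) ?_ (((integrable_const 1).add hmomμ).const_mul C) ?_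
    · exact (((tail_antitone ξ).measurable.comp (measurable_const.div measurable_id)).div_const
        _).aestronglyMeasurable
    · filter_upwards [hC] with x hx
      filter_upwards [hμpos] with u hu
      rw [Real.norm_of_nonneg (div_nonneg (tail_nonneg _ _) (tail_nonneg _ _))]
      exact hx u hu
    · filter_upwards [hμpos] with u hu
      simpa [div_eq_inv_mul, Real.inv_rpow hu.le, Real.rpow_neg hu.le] using
        hrv u⁻¹ (inv_pos.2 hu)
  rw [integral_map hη.aemeasurable (hrpow hρ.le)] at hlim
  have hc : 0 < ∫ ω, η ω ^ ρ := integral_rpow_pos hη hpos hρ.le (by linarith) hmom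
  refine (div_self hc.ne' ▸ hlim.div_const (∫ ω, η ω ^ ρ)).congr fun x => ?_
  rw [integral_div, tail_mul_eq_integral hη hξ hind hpos, div_div, mul_comm (tail ξ x)]

lemma Stationary.identDistrib {σ : ℕ → Ω → ℝ} (hσ : Stationary σ)
    (hmeas : ∀ i, Measurable (σ i)) (k : ℕ) : IdentDistrib (σ k) (σ 0) ℙ ℙ where
  aemeasurable_fst := (hmeas k).aemeasurable
  aemeasurable_snd := (hmeas 0).aemeasurable
  map_eq := by
    have h := congrArg (Measure.map fun f : Fin 1 → ℝ => f 0) (hσ k 1)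
    rwa [Measure.map_map (measurable_pi_apply 0) (measurable_pi_lambda _ fun _ => hmeas _),
      Measure.map_map (measurable_pi_apply 0) (measurable_pi_lambda _ fun _ => hmeas _)] at h

lemma IID.identDistrib {Z : ℕ → Ω → ℝ} (hZ : IID Z) (hmeas : ∀ i, Measurable (Z i))
    (k : ℕ) : IdentDistrib (Z k) (Z 0) ℙ ℙ :=
  ⟨(hmeas k).aemeasurable, (hmeas 0).aemeasurable, hZ.2 k⟩

lemma tail_min_abs_eq_atail_mul_self {X Y : Ω → ℝ} (hind : IndepFun X Y)
    (hid : IdentDistrib Y X ℙ ℙ) : tail (fun ω => min |X ω| |Y ω|) = atail X * atail X := by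
  ext x
  refine (tail_min_eq_mul (X := fun ω => |X ω|) (Y := fun ω => |Y ω|)
    (hind.comp measurable_abs measurable_abs) x).trans ?_
  exact congrArg (atail X x * ·) <| congrArg ENNReal.toReal <|
    (hid.comp measurable_abs).measure_mem_eq measurableSet_Ioi

lemma integrable_max_rpow {α : Type*} [MeasurableSpace α] {μ : Measure α} {f g : α → ℝ}
    {p : ℝ} (hp : 0 ≤ p) (hf : ∀ᵐ x ∂μ, 0 ≤ f x) (hg : ∀ᵐ x ∂μ, 0 ≤ g x)
    (hfi : Integrable (fun x => f x ^ p) μ) (hgi : Integrable (fun x => g x ^ p) μ) :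
    Integrable (fun x => max (f x) (g x) ^ p) μ :=
  (hfi.sup hgi).congr <| by
    filter_upwards [hf, hg] with x hfx hgx
    exact (Real.rpow_max hfx hgx hp).symm

lemma tail_mul_abs_eq_atail {σ Z : Ω → ℝ} (hσ : ∀ᵐ ω, 0 ≤ σ ω) :
    tail (fun ω => σ ω * |Z ω|) = atail fun ω => σ ω * Z ω :=
  funext fun _ => congrArg ENNReal.toReal <| measure_congr <| eventuallyEq_set.2 <|
    hσ.mono fun ω hω => by simp [abs_mul, abs_of_nonneg hω]

lemma lt_max_mul_min {a b s t x : ℝ} (hs : 0 ≤ s) (ht : 0 ≤ t) (ha : x < a * s)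
    (hb : x < b * t) : x < max a b * min t s := by
  rcases le_total s t with hst | hst
  · rw [min_eq_right hst]
    exact ha.trans_le (mul_le_mul_of_nonneg_right (le_max_left a b) hs)
  · rw [min_eq_left hst]
    exact hb.trans_le (mul_le_mul_of_nonneg_right (le_max_right a b) ht)

lemma pr_lt_abs_mul_and_lt_abs_mul_le [IsFiniteMeasure (ℙ : Measure Ω)]
    {σ₁ σ₂ Z₁ Z₂ : Ω → ℝ} (hσ₁ : ∀ᵐ ω, 0 ≤ σ₁ ω) (hσ₂ : ∀ᵐ ω, 0 ≤ σ₂ ω) (x : ℝ) :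
    pr {ω | x < |σ₁ ω * Z₁ ω| ∧ x < |σ₂ ω * Z₂ ω|}
      ≤ pr {ω | x < max (σ₁ ω) (σ₂ ω) * min |Z₂ ω| |Z₁ ω|} :=
  pr_mono_ae <| (hσ₁.and hσ₂).mono fun ω ⟨h₁, h₂⟩ ⟨hx₁, hx₂⟩ => by
    rw [abs_mul, abs_of_nonneg h₁] at hx₁
    rw [abs_mul, abs_of_nonneg h₂] at hx₂
    exact lt_max_mul_min (abs_nonneg _) (abs_nonneg _) hx₁ hx₂

lemma tendsto_div_nhds_zero_of_le_of_tendsto_div_sq {α : Type*} {l : Filter α}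
    {f g e T : α → ℝ} {c₁ c₂ : ℝ} (hc₁ : c₁ ≠ 0) (hf : ∀ x, 0 ≤ f x)
    (hfg : ∀ x, f x ≤ g x)
    (hg : Tendsto (fun x => g x / (c₂ * T x ^ 2)) l (𝓝 1))
    (he : Tendsto (fun x => e x / (c₁ * T x)) l (𝓝 1)) (hT : Tendsto T l (𝓝 0)) :
    Tendsto (fun x => f x / e x) l (𝓝 0) := by
  have hfg' : f =O[l] g := isBigO_of_le _ fun x => by
    rw [Real.norm_of_nonneg (hf x), Real.norm_of_nonneg ((hf x).trans (hfg x))]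
    exact hfg x
  have hT2 : (fun x => T x ^ 2) =o[l] T := by
    simpa [sq] using ((isLittleO_one_iff ℝ).2 hT).mul_isBigO (isBigO_refl T l)
  have hge : g =o[l] e :=
    (isEquivalent_of_tendsto_one (v := fun x => c₂ * T x ^ 2) hg).isBigO.trans_isLittleO <|
      (isBigO_const_mul_self c₂ _ l).trans_isLittleO <| hT2.trans_isBigO <|
        (isBigO_self_const_mul hc₁ T l).trans
          (isEquivalent_of_tendsto_one (u := e) (v := fun x => c₁ * T x) he).isBigO_symm
  exact (hfg'.trans_isLittleO hge).tendsto_div_nhds_zero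

/-- **Example 2.7** (stochastic volatility, regularly varying case).
For `X_t = σ_t Z_t` with positive stationary `(σ_t)` independent of the iid
sequence `(Z_t)`, `|Z|` regularly varying with index `α > 0`, and
`E[σ^{2α+δ}] < ∞`: for every `h ≥ 1`,
`P(|X_h|>x, |X_0|>x) ≤ P((σ_h ∨ σ_0)(|Z_0| ∧ |Z_h|) > x)
  ∼ E[(σ_h ∨ σ_0)^{2α}] (P(|Z|>x))²`,
`P(|X|>x) ∼ E[σ^α] P(|Z|>x)` (Breiman), and hence
`P(|X_h|>x | |X_0|>x) → 0` (condition RV3; asymptotic independence). -/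
theorem statement15
    {Ω : Type*} [MeasureSpace Ω] [IsProbabilityMeasure (ℙ : Measure Ω)]
    (σv : ℕ → Ω → ℝ) (Z : ℕ → Ω → ℝ)
    (hσmeas : ∀ i, Measurable (σv i)) (hZmeas : ∀ i, Measurable (Z i))
    (hσpos : ∀ᵐ ω ∂ℙ, ∀ i, 0 < σv i ω)
    (hσstat : Stationary σv)
    (hZiid : IID Z)
    (hindep : IndepFun (fun ω => fun i => σv i ω) (fun ω => fun i => Z i ω) ℙ)
    (α : ℝ) (hα : 0 < α)
    (hZrv : RegVaryingTail (fun ω => |Z 0 ω|) α)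
    (δ : ℝ) (hδ : 0 < δ)
    (hmom : Integrable (fun ω => σv 0 ω ^ (2 * α + δ)))
    (X : ℕ → Ω → ℝ) (hX : ∀ t ω, X t ω = σv t ω * Z t ω) :
    ∀ h : ℕ, 1 ≤ h →
      -- the pointwise domination
      (∀ x : ℝ, pr {ω | x < |X h ω| ∧ x < |X 0 ω|}
          ≤ pr {ω | x < max (σv h ω) (σv 0 ω) * min |Z 0 ω| |Z h ω|}) ∧
      -- Breiman's lemma for the dominating product
      Tendsto (fun x =>
          pr {ω | x < max (σv h ω) (σv 0 ω) * min |Z 0 ω| |Z h ω|}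
            / ((∫ ω, max (σv h ω) (σv 0 ω) ^ (2 * α)) * (atail (Z 0) x) ^ 2))
        atTop (𝓝 1) ∧
      -- Breiman's lemma for the marginal tail
      Tendsto (fun x => atail (X 0) x / ((∫ ω, σv 0 ω ^ α) * atail (Z 0) x))
        atTop (𝓝 1) ∧
      -- condition RV3 / asymptotic independence
      Tendsto (fun x =>
          pr {ω | x < |X h ω| ∧ x < |X 0 ω|} / atail (X 0) x) atTop (𝓝 0) := by
  intro h hh
  obtain rfl : X = fun t ω => σv t ω * Z t ω := funext₂ hX
  have hσ : ∀ i, ∀ᵐ ω, 0 < σv i ω := fun i => hσpos.mono fun _ hω => hω i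
  have hrv : RegularlyVaryingFun (atail (Z 0)) (-α) := hZrv.regularlyVaryingFun
  have hmin : tail (fun ω => min |Z 0 ω| |Z h ω|) = atail (Z 0) * atail (Z 0) :=
    tail_min_abs_eq_atail_mul_self (hZiid.1.indepFun (by omega)) (hZiid.identDistrib hZmeas h)
  have hσh : Integrable fun ω => σv h ω ^ (2 * α + δ) :=
    ((hσstat.identDistrib hσmeas h).comp
      (Real.continuous_rpow_const (by positivity)).measurable).integrable_iff.2 hmom
  have hB₂ := breiman ((hσmeas h).max (hσmeas 0)) ((hZmeas 0).abs.min (hZmeas h).abs)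
    (hindep.comp ((measurable_pi_apply h).max (measurable_pi_apply 0))
      ((measurable_pi_apply 0).abs.min (measurable_pi_apply h).abs))
    ((hσ 0).mono fun _ hω => lt_max_of_lt_right hω) (by positivity) hδ
    (integrable_max_rpow (by positivity) ((hσ h).mono fun _ hω => hω.le)
      ((hσ 0).mono fun _ hω => hω.le) hσh hmom)
    (by rw [hmin, show -(2 * α) = -α + -α by ring]; exact hrv.mul hrv)
  rw [hmin] at hB₂
  simp only [tail, Pi.mul_apply, ← sq] at hB₂
  have hB₁ := breiman (hσmeas 0) (hZmeas 0).abs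
    (hindep.comp (measurable_pi_apply 0) (measurable_pi_apply 0).abs) (hσ 0) hα
    (by positivity : 0 < α + δ) (by convert hmom using 3; ring) hrv
  rw [tail_mul_abs_eq_atail ((hσ 0).mono fun _ hω => hω.le)] at hB₁
  have hdom := pr_lt_abs_mul_and_lt_abs_mul_le (Z₁ := Z h) (Z₂ := Z 0)
    ((hσ h).mono fun _ hω => hω.le) ((hσ 0).mono fun _ hω => hω.le)
  refine ⟨hdom, hB₂, hB₁, tendsto_div_nhds_zero_of_le_of_tendsto_div_sq
    (integral_rpow_pos (hσmeas 0) (hσ 0) hα.le (by linarith) hmom).ne' (fun _ => pr_nonneg _)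
    hdom hB₂ hB₁ (tendsto_tail_atTop (hZmeas 0).abs)⟩

end PLD
end
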